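/- arXiv:2605.03107 — 5 statements merged into one kernel-verified Lean document; each statement's English description precedes it below -/
import Mathlib

section
/- Let G be a finite group, N a normal subgroup of G, and U a subgroup of N with [N : U] = 2. Then the restriction to N of the character induced from the trivial character of U satisfies Res^G_N Ind^G_U 1_U = [G : N]·1_N + Σ_{Ng ∈ N\G} χ_{gUg⁻¹}, where χ_{gUg⁻¹} is the unique linear character of N with values in {±1} and kernel gUg⁻¹, and the sum runs over a set of representatives of the cosets N\G. -/
/-!
Count the fixed points of `n ∈ N` on `G ⧸ U` fibrewise over `G ⧸ N`. The cosets over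
`q = Nr` (with `r = rep q`) are the `r m U`, `m U ∈ N ⧸ U`, two of them. Since `U` has index
two in `N` it is normal there, so `(r m)⁻¹ n (r m) ∈ U` iff `r⁻¹ n r ∈ U`, i.e. iff
`χ_q(n) = 1`: the fibre over `q` contributes `1 + χ_q(n)` fixed points (`2` or `0`).
-/

theorem Subgroup.conj_mem_iff_of_subgroupOf_index_eq_two {G : Type*} [Group G]
    {N U : Subgroup G} (hidx : (U.subgroupOf N).index = 2) {m u : G} (hm : m ∈ N)
    (hu : u ∈ N) : m⁻¹ * u * m ∈ U ↔ u ∈ U := by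
  have key : (⟨m, hm⟩⁻¹ * ⟨u, hu⟩ * ⟨m, hm⟩ : N) ∈ U.subgroupOf N ↔
      (⟨u, hu⟩ : N) ∈ U.subgroupOf N := by
    rw [mul_mem_iff_of_index_two hidx, mul_mem_iff_of_index_two hidx, inv_mem_iff]
    tauto
  simpa [Subgroup.mem_subgroupOf] using key

theorem MonoidHom.apply_eq_one_iff_mem_map_subtype_ker {G M : Type*} [Group G] [Monoid M]
    {N : Subgroup G} (χ : N →* M) {n : G} (hn : n ∈ N) :
    χ ⟨n, hn⟩ = 1 ↔ n ∈ χ.ker.map N.subtype :=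
  (Subgroup.mem_map_iff_mem N.subtype_injective (K := χ.ker) (x := ⟨n, hn⟩)).symm

theorem MulAut.mem_map_conj_iff {G : Type*} [Group G] (U : Subgroup G) (r n : G) :
    n ∈ U.map (MulAut.conj r).toMonoidHom ↔ r⁻¹ * n * r ∈ U := by
  rw [Subgroup.mem_map_equiv]
  simp

theorem Int.one_add_units_eq (u : ℤˣ) : (1 + u : ℤ) = if u = 1 then 2 else 0 := by
  rcases Int.units_eq_one_or u with rfl | rfl <;> decide

theorem QuotientGroup.smul_mk_eq_mk_iff {G : Type*} [Group G] (U : Subgroup G) (n g : G) :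
    n • (g : G ⧸ U) = g ↔ g⁻¹ * n * g ∈ U := by
  rw [MulAction.Quotient.smul_mk, QuotientGroup.eq, ← inv_mem_iff]
  simp [mul_assoc]

section

variable {G : Type*} [Group G] {N U : Subgroup G} [N.Normal]

theorem smul_mk_mul_eq_mk_mul_iff (hidx : (U.subgroupOf N).index = 2) {n : G} (hn : n ∈ N)
    (r : G) {m : G} (hm : m ∈ N) :
    n • ((r * m : G) : G ⧸ U) = (r * m : G) ↔ r⁻¹ * n * r ∈ U := by
  rw [QuotientGroup.smul_mk_eq_mk_iff,
    show (r * m)⁻¹ * n * (r * m) = m⁻¹ * (r⁻¹ * n * r) * m by group]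
  exact Subgroup.conj_mem_iff_of_subgroupOf_index_eq_two hidx hm
    (Subgroup.Normal.conj_mem' ‹_› n hn r)

theorem card_fixed_quotient_eq_card_mul_two (hUN : U ≤ N) (hidx : (U.subgroupOf N).index = 2)
    (rep : G ⧸ N → G) (hrep : Function.RightInverse rep QuotientGroup.mk) {n : G}
    (hn : n ∈ N) :
    Nat.card {x : G ⧸ U // n • x = x} =
      Nat.card {q : G ⧸ N // (rep q)⁻¹ * n * rep q ∈ U} * 2 := by
  set e := (Subgroup.quotientEquivProdOfLE' hUN rep hrep).symm
  have hfix : ∀ p : (G ⧸ N) × (N ⧸ U.subgroupOf N),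
      (rep p.1)⁻¹ * n * rep p.1 ∈ U ↔ n • e p = e p := by
    rintro ⟨q, m⟩
    induction m using QuotientGroup.induction_on with
    | H m => exact (smul_mk_mul_eq_mk_mul_iff hidx hn (rep q) m.2).symm
  have e' := (e.subtypeEquiv (q := fun x => n • x = x) hfix).symm.trans
    (Equiv.prodSubtypeFstEquivSubtypeProd (p := fun q => (rep q)⁻¹ * n * rep q ∈ U))
  rw [Nat.card_congr e', Nat.card_prod, ← Subgroup.index, hidx]

end

theorem stmt1_general (G : Type*) [Group G] (N U : Subgroup G) [N.Normal]
    (hUN : U ≤ N) (hidx : (U.subgroupOf N).index = 2)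
    [Fintype (G ⧸ N)]
    (rep : G ⧸ N → G) (hrep : ∀ q : G ⧸ N, (QuotientGroup.mk (rep q) : G ⧸ N) = q)
    (χ : G ⧸ N → (↥N →* ℤˣ))
    (hχ : ∀ q : G ⧸ N,
      Subgroup.map N.subtype (χ q).ker
        = Subgroup.map (MulAut.conj (rep q)).toMonoidHom U) :
    ∀ (n : G) (hn : n ∈ N),
      (Nat.card {x : G ⧸ U // n • x = x} : ℤ)
        = (N.index : ℤ) + ∑ q : G ⧸ N, ((χ q ⟨n, hn⟩ : ℤˣ) : ℤ) := by
  intro n hn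
  classical
  have hχn : ∀ q, χ q ⟨n, hn⟩ = 1 ↔ (rep q)⁻¹ * n * rep q ∈ U := fun q => by
    rw [(χ q).apply_eq_one_iff_mem_map_subtype_ker, hχ q, MulAut.mem_map_conj_iff]
  calc (Nat.card {x : G ⧸ U // n • x = x} : ℤ)
      = Nat.card {q : G ⧸ N // (rep q)⁻¹ * n * rep q ∈ U} * 2 := by
        rw [card_fixed_quotient_eq_card_mul_two hUN hidx rep hrep hn, Nat.cast_mul, Nat.cast_two]
    _ = ∑ q : G ⧸ N, (1 + ((χ q ⟨n, hn⟩ : ℤˣ) : ℤ)) := by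
        simp_rw [Int.one_add_units_eq, hχn]
        rw [Finset.sum_ite, Finset.sum_const_zero, add_zero, Finset.sum_const, nsmul_eq_mul,
          Nat.card_eq_fintype_card, Fintype.card_subtype]
    _ = (N.index : ℤ) + ∑ q : G ⧸ N, ((χ q ⟨n, hn⟩ : ℤˣ) : ℤ) := by
        rw [Finset.sum_add_distrib, Finset.sum_const, Finset.card_univ, Subgroup.index_eq_card,
          Nat.card_eq_fintype_card, nsmul_one]

/-- Let `G` be a finite group, `N ⊴ G`, and `U ≤ N` with `[N : U] = 2`.
Then the restriction to `N` of the character of `G` induced from the trivial character of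
`U` (the permutation character of `G` on `G/U`) satisfies
`Res^G_N Ind^G_U 1_U = [G : N]·1_N + ∑_{Ng} χ_{gUg⁻¹}`,
where for each coset (with chosen representative `rep q`) `χ_{gUg⁻¹}` is the unique
`{±1}`-valued character of `N` whose kernel is exactly `gUg⁻¹`. -/
theorem stmt1 (G : Type*) [Group G] [Fintype G] (N U : Subgroup G) [N.Normal]
    (hUN : U ≤ N) (hidx : (U.subgroupOf N).index = 2)
    [Fintype (G ⧸ N)]
    (rep : G ⧸ N → G) (hrep : ∀ q : G ⧸ N, (QuotientGroup.mk (rep q) : G ⧸ N) = q)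
    (χ : G ⧸ N → (↥N →* ℤˣ))
    (hχ : ∀ q : G ⧸ N,
      Subgroup.map N.subtype (χ q).ker
        = Subgroup.map (MulAut.conj (rep q)).toMonoidHom U) :
    ∀ (n : G) (hn : n ∈ N),
      (Nat.card {x : G ⧸ U // n • x = x} : ℤ)
        = (N.index : ℤ) + ∑ q : G ⧸ N, ((χ q ⟨n, hn⟩ : ℤˣ) : ℤ) :=
  stmt1_general G N U hUN hidx rep hrep χ hχ
end

section
/- Let G be a finite group and let U₁, U₂ be subgroups of G such that the induced characters Ind^G_{U₁} 1_{U₁} and Ind^G_{U₂} 1_{U₂} from the trivial characters are equal. Suppose there exists a normal subgroup N of G containing both U₁ and U₂ as subgroups of index 2. Then U₁ and U₂ are conjugate in G. -/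
/-!
Write `Uʰ = hUh⁻¹`. Since `h⁻¹gh ∈ U` exactly when `g` fixes the coset `hU`, the number of
`h ∈ G` with `g ∈ Uʰ` is `|U|` times the number of fixed points of `g` on `G ⧸ U`. Summing over
`g ∈ U₂` shows that `∑ₕ |U₁ʰ ∩ U₂| = ∑ₕ |U₂ʰ ∩ U₂|`, as `U₁` and `U₂` have the same order and the
same permutation character. Every conjugate `A` of `U₁` or `U₂` lies in `N` and has order `|U₂|`,
so, as `[N : U₂] = 2`, the subgroup `A ∩ U₂` has index at most `2` in `A`, and index exactly `2`
unless `A = U₂`. If no conjugate of `U₁` were `U₂`, the left sum would be `|G| |U₂| / 2`, while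
the right one is larger because its term at `h = 1` is `|U₂|`.
-/

namespace Subgroup

variable {G : Type*} [Group G]

theorem mem_map_conj_iff {U : Subgroup G} {h n : G} :
    n ∈ U.map (MulAut.conj h).toMonoidHom ↔ h⁻¹ * n * h ∈ U := by
  rw [mem_map_equiv, MulAut.conj_symm_apply]

theorem map_conj_le {U N : Subgroup G} [N.Normal] (hU : U ≤ N) (h : G) :
    U.map (MulAut.conj h).toMonoidHom ≤ N :=
  (map_mono hU).trans_eq (Normal.map_conj_eq (H := N) h)

theorem card_map_conj (U : Subgroup G) (h : G) :
    Nat.card (U.map (MulAut.conj h).toMonoidHom) = Nat.card U :=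
  (Nat.card_congr (U.equivMapOfInjective _ (MulAut.conj h).injective).toEquiv).symm

theorem card_mul_relIndex {H K : Subgroup G} (h : H ≤ K) :
    Nat.card H * H.relIndex K = Nat.card K := by
  rw [← Nat.card_congr (subgroupOfEquivOfLe h).toEquiv]
  exact (H.subgroupOf K).card_mul_index

theorem card_eq_card_of_relIndex_eq {A B N : Subgroup G} (hA : A ≤ N) (hB : B ≤ N)
    (h : A.relIndex N = B.relIndex N) (hN : A.relIndex N ≠ 0) : Nat.card A = Nat.card B :=
  Nat.eq_of_mul_eq_mul_right (Nat.pos_of_ne_zero hN)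
    ((card_mul_relIndex hA).trans (h ▸ card_mul_relIndex hB).symm)

theorem card_inf_mul_relIndex (A B : Subgroup G) :
    Nat.card ↥(A ⊓ B) * B.relIndex A = Nat.card A := by
  rw [← inf_relIndex_left, card_mul_relIndex inf_le_left]

theorem card_le_card_inf_mul_relIndex {A B N : Subgroup G} (hA : A ≤ N) (hB : B.relIndex N ≠ 0) :
    Nat.card A ≤ Nat.card ↥(A ⊓ B) * B.relIndex N := by
  rw [← card_inf_mul_relIndex A B]
  exact Nat.mul_le_mul_left _ (relIndex_le_of_le_right hA hB)

theorem card_inf_mul_two_le {A B : Subgroup G} [Finite A] (h : ¬A ≤ B) :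
    Nat.card ↥(A ⊓ B) * 2 ≤ Nat.card A := by
  have hne_one : B.relIndex A ≠ 1 := mt relIndex_eq_one.mp h
  have hne_zero : B.relIndex A ≠ 0 := index_ne_zero_of_finite
  rw [← card_inf_mul_relIndex A B]
  exact Nat.mul_le_mul_left _ (by omega)

end Subgroup

namespace QuotientGroup

variable {G : Type*} [Group G]

theorem smul_mk_eq_mk_iff_s2 {U : Subgroup G} {g h : G} :
    g • (h : G ⧸ U) = h ↔ h⁻¹ * g * h ∈ U := by
  rw [MulAction.Quotient.smul_mk, eq_comm, QuotientGroup.eq, smul_eq_mul, mul_assoc]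

theorem card_conj_mem (U : Subgroup G) (g : G) :
    Nat.card {h : G // h⁻¹ * g * h ∈ U} = Nat.card U * Nat.card {x : G ⧸ U // g • x = x} := by
  rw [← Nat.card_prod]
  exact Nat.card_congr ((Equiv.subtypeEquivRight fun h => smul_mk_eq_mk_iff_s2.symm).trans
    (preimageMkEquivSubgroupProdSet U {x | g • x = x}))

end QuotientGroup

open Subgroup QuotientGroup

theorem Nat.card_subtype_eq_sum_ite {α : Type*} [Fintype α] (p : α → Prop) [DecidablePred p] :
    Nat.card {a // p a} = ∑ a, if p a then 1 else 0 := by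
  rw [Nat.card_eq_fintype_card, Fintype.card_subtype, Finset.card_filter]

theorem sum_card_map_conj_inf {G : Type*} [Group G] [Fintype G] (U V : Subgroup G)
    [DecidablePred (· ∈ V)] :
    ∑ h : G, Nat.card ↥(U.map (MulAut.conj h).toMonoidHom ⊓ V) =
      Nat.card U * ∑ g : V, Nat.card {x : G ⧸ U // (g : G) • x = x} := by
  classical
  have card_inf (A : Subgroup G) : Nat.card ↥(A ⊓ V) = Nat.card {g : V // (g : G) ∈ A} := by
    rw [Nat.card_congr (subgroupOfEquivOfLe inf_le_right).toEquiv.symm, inf_subgroupOf_right]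
    rfl
  calc ∑ h : G, Nat.card ↥(U.map (MulAut.conj h).toMonoidHom ⊓ V)
      = ∑ h : G, ∑ g : V, if h⁻¹ * g * h ∈ U then 1 else 0 := by
        simp only [card_inf, mem_map_conj_iff, Nat.card_subtype_eq_sum_ite]
    _ = ∑ g : V, ∑ h : G, if h⁻¹ * g * h ∈ U then 1 else 0 := Finset.sum_comm
    _ = Nat.card U * ∑ g : V, Nat.card {x : G ⧸ U // (g : G) • x = x} := by
        simp only [← Nat.card_subtype_eq_sum_ite, card_conj_mem, Finset.mul_sum]

/-- Let `G` be a finite group and `U₁, U₂ ≤ G` with equal induced trivial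
characters (i.e. the permutation characters of `G` on `G/U₁` and `G/U₂` coincide).
If there is a normal subgroup `N ⊴ G` containing `U₁` and `U₂` as index-2 subgroups,
then `U₁` and `U₂` are conjugate in `G`. -/
theorem stmt2 (G : Type*) [Group G] [Fintype G] (U₁ U₂ N : Subgroup G) [N.Normal]
    (h₁ : U₁ ≤ N) (h₂ : U₂ ≤ N)
    (hi₁ : (U₁.subgroupOf N).index = 2) (hi₂ : (U₂.subgroupOf N).index = 2)
    (hchar : ∀ g : G,
      Nat.card {x : G ⧸ U₁ // g • x = x} = Nat.card {x : G ⧸ U₂ // g • x = x}) :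
    ∃ g : G, Subgroup.map (MulAut.conj g).toMonoidHom U₁ = U₂ := by
  classical
  have hi₂' : U₂.relIndex N = 2 := hi₂
  have hcard : Nat.card U₁ = Nat.card U₂ :=
    card_eq_card_of_relIndex_eq h₁ h₂ (hi₁.trans hi₂.symm) (by simp [relIndex, hi₁])
  have hsum : ∑ h : G, Nat.card ↥(U₁.map (MulAut.conj h).toMonoidHom ⊓ U₂) * 2 =
      ∑ h : G, Nat.card ↥(U₂.map (MulAut.conj h).toMonoidHom ⊓ U₂) * 2 := by
    simp only [← Finset.sum_mul, sum_card_map_conj_inf, hcard, hchar]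
  by_contra! hne
  have hle (h : G) : Nat.card ↥(U₁.map (MulAut.conj h).toMonoidHom ⊓ U₂) * 2 ≤ Nat.card U₂ := by
    refine (card_inf_mul_two_le fun hle => hne h (eq_of_le_of_card_ge hle ?_)).trans_eq ?_ <;>
      rw [card_map_conj, hcard]
  have hge (h : G) : Nat.card U₂ ≤ Nat.card ↥(U₂.map (MulAut.conj h).toMonoidHom ⊓ U₂) * 2 :=
    hi₂' ▸ card_map_conj U₂ h ▸ card_le_card_inf_mul_relIndex (map_conj_le h₂ h) (by omega)
  have hlt : Nat.card U₂ < Nat.card ↥(U₂.map (MulAut.conj 1).toMonoidHom ⊓ U₂) * 2 := by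
    have hU₂ : U₂.map (MulAut.conj 1).toMonoidHom = U₂ := by ext; simp
    rw [hU₂, inf_idem]
    linarith [Nat.card_pos (α := U₂)]
  refine (calc ∑ h : G, Nat.card ↥(U₁.map (MulAut.conj h).toMonoidHom ⊓ U₂) * 2
      _ ≤ ∑ h : G, Nat.card U₂ := Finset.sum_le_sum fun h _ => hle h
      _ < ∑ h : G, Nat.card ↥(U₂.map (MulAut.conj h).toMonoidHom ⊓ U₂) * 2 :=
        Finset.sum_lt_sum (fun h _ => hge h) ⟨1, Finset.mem_univ _, hlt⟩).ne hsum
end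

section
/- Let m ≥ 1, r ≥ 0 and let a₁, …, a_r ∈ ℤ/m. Then the number of subsets U ⊆ {1, …, r} with Σ_{i ∈ U} a_i = 0 in ℤ/m (including the empty set) is at least 2^{⌊r/m⌋}. -/
/-!
Among the `|G| + 1` prefix sums of `|G|` elements of a finite abelian group `G` two coincide, so
some nonempty block of at most `|G|` of the elements sums to zero. Removing such blocks greedily
from `r` elements yields `⌊r / |G|⌋` pairwise disjoint nonempty zero-sum sets, and the unions of
their subfamilies are `2 ^ ⌊r / |G|⌋` distinct zero-sum sets.
-/

open Finset

section ZeroSum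

variable {ι G : Type*} [AddCommGroup G]

theorem Fin.exists_nonempty_sum_eq_zero_of_card_le [Fintype G] {n : ℕ} (g : Fin n → G)
    (hn : Fintype.card G ≤ n) : ∃ T : Finset (Fin n), T.Nonempty ∧ ∑ i ∈ T, g i = 0 := by
  let prefixSum (k : ℕ) : G := ∑ i ∈ univ.filter (fun i : Fin n => (i : ℕ) < k), g i
  obtain ⟨i, hi, j, hj, hne, hij⟩ := exists_ne_map_eq_of_card_lt_of_maps_to
    (s := range (n + 1)) (t := univ) (by simpa [Nat.lt_succ_iff]) (f := prefixSum)
    (fun _ _ => mem_univ _)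
  wlog hlt : i < j generalizing i j
  · exact this j hj i hi hne.symm hij.symm (by omega)
  set T := univ.filter fun x : Fin n => i ≤ x ∧ (x : ℕ) < j
  have hjn : j ≤ n := by simpa [Nat.lt_succ_iff] using hj
  have hsplit : prefixSum j = prefixSum i + ∑ x ∈ T, g x := by
    rw [← sum_union (disjoint_filter.2 fun x _ hx hT => by omega)]
    refine sum_congr (ext fun x => ?_) fun _ _ => rfl
    simp only [mem_filter, mem_univ, true_and, mem_union]
    omega
  exact ⟨T, ⟨⟨i, by omega⟩, by simp [T, hlt]⟩, by simpa [hij] using hsplit⟩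

theorem Finset.exists_subset_sum_eq_zero_of_card_le [Fintype G] (f : ι → G) {s : Finset ι}
    (hs : Fintype.card G ≤ #s) :
    ∃ t ⊆ s, t.Nonempty ∧ #t ≤ Fintype.card G ∧ ∑ i ∈ t, f i = 0 := by
  obtain ⟨u, hus, hu⟩ := exists_subset_card_eq hs
  let e : Fin #u ↪ ι := u.equivFin.symm.toEmbedding.trans (Function.Embedding.subtype _)
  obtain ⟨T, hT, hsum⟩ := Fin.exists_nonempty_sum_eq_zero_of_card_le (f ∘ e) hu.ge
  refine ⟨T.map e, fun x hx => hus ?_, hT.map, ?_, by simpa using hsum⟩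
  · obtain ⟨k, -, rfl⟩ := mem_map.1 hx
    exact (u.equivFin.symm k).2
  · simpa [← hu] using T.card_le_univ

theorem Finset.exists_pairwiseDisjoint_sum_eq_zero [Fintype G] [DecidableEq ι] (f : ι → G)
    (k : ℕ) {s : Finset ι} (hs : k * Fintype.card G ≤ #s) :
    ∃ P : Finset (Finset ι), #P = k ∧ (P : Set (Finset ι)).PairwiseDisjoint id ∧
      ∀ t ∈ P, t ⊆ s ∧ t.Nonempty ∧ ∑ i ∈ t, f i = 0 := by
  induction k generalizing s with
  | zero => exact ⟨∅, rfl, by simp, by simp⟩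
  | succ k ih =>
    obtain ⟨t, hts, ht, htcard, htsum⟩ :=
      exists_subset_sum_eq_zero_of_card_le f (s := s) (by nlinarith)
    obtain ⟨P, hP, hdisj, hPs⟩ := ih (s := s \ t) <| by
      rw [card_sdiff_of_subset hts]
      rw [Nat.succ_mul] at hs
      omega
    have hdisj_t : ∀ u ∈ P, Disjoint t u := fun u hu =>
      disjoint_of_subset_right (hPs u hu).1 disjoint_sdiff
    have htP : t ∉ P := fun htP => ht.ne_empty (disjoint_self.1 (hdisj_t t htP))
    refine ⟨insert t P, by rw [card_insert_of_notMem htP, hP], ?_, ?_⟩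
    · rw [coe_insert]
      exact hdisj.insert fun u hu _ => hdisj_t u hu
    · rintro u hu
      obtain rfl | hu := mem_insert.1 hu
      · exact ⟨hts, ht, htsum⟩
      · exact ⟨(hPs u hu).1.trans sdiff_subset, (hPs u hu).2⟩

theorem Finset.biUnion_id_injOn_powerset [DecidableEq ι] {P : Finset (Finset ι)}
    (hdisj : (P : Set (Finset ι)).PairwiseDisjoint id) (hne : ∀ t ∈ P, t.Nonempty) :
    Set.InjOn (fun Q : Finset (Finset ι) => Q.biUnion id) P.powerset := by
  have hsub : ∀ Q ⊆ P, ∀ Q' ⊆ P, Q.biUnion id ⊆ Q'.biUnion id → Q ⊆ Q' := by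
    intro Q hQ Q' hQ' h t ht
    obtain ⟨x, hx⟩ := hne t (hQ ht)
    obtain ⟨t', ht', hxt'⟩ := mem_biUnion.1 (h (mem_biUnion.2 ⟨t, ht, hx⟩))
    rwa [hdisj.elim_finset (hQ ht) (hQ' ht') x hx hxt']
  intro Q hQ Q' hQ' h
  rw [coe_powerset, Set.mem_preimage, Set.mem_powerset_iff, coe_subset] at hQ hQ'
  exact (hsub Q hQ Q' hQ' h.le).antisymm (hsub Q' hQ' Q hQ h.ge)

theorem Finset.two_pow_card_le_card_filter_sum_eq_zero [DecidableEq G] [Fintype ι]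
    [DecidableEq ι] (f : ι → G) {P : Finset (Finset ι)}
    (hdisj : (P : Set (Finset ι)).PairwiseDisjoint id)
    (hne : ∀ t ∈ P, t.Nonempty) (hzero : ∀ t ∈ P, ∑ i ∈ t, f i = 0) :
    2 ^ #P ≤ #(univ.filter fun U : Finset ι => ∑ i ∈ U, f i = 0) := by
  rw [← card_powerset]
  refine card_le_card_of_injOn (fun Q => Q.biUnion id) (fun Q hQ => ?_)
    (biUnion_id_injOn_powerset hdisj hne)
  have hQ : Q ⊆ P := by simpa using hQ
  rw [coe_filter, Set.mem_ofPred_eq, sum_biUnion (hdisj.subset hQ)]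
  exact ⟨mem_univ _, sum_eq_zero fun t ht => hzero t (hQ ht)⟩

end ZeroSum

/-- For `m ≥ 1`, `r ≥ 0` and `a₁, …, a_r ∈ ℤ/m`, the number of subsets
`U ⊆ {1, …, r}` with `∑_{i ∈ U} a_i = 0` in `ℤ/m` (including the empty set) is at least
`2^⌊r/m⌋`. -/
theorem stmt6 (m r : ℕ) (hm : 1 ≤ m) (a : Fin r → ZMod m) :
    2 ^ (r / m) ≤ (Finset.univ.filter fun U : Finset (Fin r) => ∑ i ∈ U, a i = 0).card := by
  have : NeZero m := ⟨by omega⟩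
  obtain ⟨P, hP, hdisj, hPzero⟩ := exists_pairwiseDisjoint_sum_eq_zero a (r / m) (s := univ)
    (by simpa using Nat.div_mul_le_self r m)
  rw [← hP]
  exact two_pow_card_le_card_filter_sum_eq_zero a hdisj (fun t ht => (hPzero t ht).2.1)
    fun t ht => (hPzero t ht).2.2
end

section
/- Let G = (ℤ/2)³ ⋊ ℤ/3, where ℤ/3 acts by cyclically permuting the three coordinates. Let U = {(a, b, 0)} ≅ (ℤ/2)², V₁ = {(a, 0, 0)} and V₂ = {(0, b, 0)} be the indicated coordinate subgroups of the base (ℤ/2)³. Then: (a) V₂ = gV₁g⁻¹ for some g ∈ G; but (b) there is no g ∈ G with both gUg⁻¹ = U and gV₁g⁻¹ = V₂. In particular, no element of the normalizer N_G(U) conjugates V₁ to V₂. -/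
/-! The wreath-product-type group `G = (ℤ/2)³ ⋊ ℤ/3`, with `ℤ/3` acting by cyclically
permuting the three coordinates (indexed by `ZMod 3`).  We use the multiplicative
versions of the cyclic groups so as to apply Mathlib's `SemidirectProduct`. -/

/-- The base group `(ℤ/2)³`, with coordinates indexed by `ZMod 3`. -/
abbrev WreathBase : Type := ZMod 3 → Multiplicative (ZMod 2)

/-- The cyclic-shift automorphism of `(ℤ/2)³` associated to `c : ℤ/3`. -/
def wreathShift (c : ZMod 3) : WreathBase ≃* WreathBase where
  toFun f := fun i => f (i + c)
  invFun f := fun i => f (i - c)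
  left_inv f := by funext i; simp
  right_inv f := by funext i; simp
  map_mul' f g := rfl

/-- The action of `ℤ/3` on `(ℤ/2)³` by cyclic shifts, as a homomorphism to `MulAut`. -/
def wreathAction : Multiplicative (ZMod 3) →* MulAut WreathBase where
  toFun g := wreathShift (Multiplicative.toAdd g)
  map_one' := by
    ext f i
    show f (i + Multiplicative.toAdd (1 : Multiplicative (ZMod 3))) = f i
    simp
  map_mul' g h := by
    ext f i
    simp [wreathShift, add_right_comm]
    exact congrArg f (add_assoc _ _ _).symm

/-- The group `G = (ℤ/2)³ ⋊ ℤ/3`. -/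
abbrev WreathG : Type := WreathBase ⋊[wreathAction] Multiplicative (ZMod 3)

/-- The subgroup `U = {(a, b, 0)}` of the base: third coordinate trivial. -/
def wreathU : Subgroup WreathG :=
  Subgroup.map (SemidirectProduct.inl : WreathBase →* WreathG)
    (Pi.evalMonoidHom (fun _ : ZMod 3 => Multiplicative (ZMod 2)) 2).ker

/-- The subgroup `V₁ = {(a, 0, 0)}`: only the first coordinate may be nontrivial. -/
def wreathV₁ : Subgroup WreathG :=
  Subgroup.map (SemidirectProduct.inl : WreathBase →* WreathG)
    ((Pi.evalMonoidHom (fun _ : ZMod 3 => Multiplicative (ZMod 2)) 1).ker ⊓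
      (Pi.evalMonoidHom (fun _ : ZMod 3 => Multiplicative (ZMod 2)) 2).ker)

/-- The subgroup `V₂ = {(0, b, 0)}`: only the second coordinate may be nontrivial. -/
def wreathV₂ : Subgroup WreathG :=
  Subgroup.map (SemidirectProduct.inl : WreathBase →* WreathG)
    ((Pi.evalMonoidHom (fun _ : ZMod 3 => Multiplicative (ZMod 2)) 0).ker ⊓
      (Pi.evalMonoidHom (fun _ : ZMod 3 => Multiplicative (ZMod 2)) 2).ker)


lemma conj_inl (g : WreathG) (b : WreathBase) :
    g * SemidirectProduct.inl b * g⁻¹ =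
      SemidirectProduct.inl (wreathAction g.right b) := by
  ext
  · simp [SemidirectProduct.mul_left, SemidirectProduct.inv_left, mul_comm, mul_assoc,
      mul_left_comm]
  · simp [SemidirectProduct.mul_right]

lemma conj_map_inl (g : WreathG) (K : Subgroup WreathBase) :
    Subgroup.map (MulAut.conj g).toMonoidHom
        (Subgroup.map (SemidirectProduct.inl : WreathBase →* WreathG) K) =
      Subgroup.map (SemidirectProduct.inl : WreathBase →* WreathG)
        (Subgroup.map (wreathAction g.right).toMonoidHom K) := by
  rw [Subgroup.map_map, Subgroup.map_map]
  congr 1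
  ext b : 1
  exact conj_inl g b

lemma part_a : Subgroup.map
    (MulAut.conj (SemidirectProduct.inr (Multiplicative.ofAdd 2) : WreathG)).toMonoidHom
    wreathV₁ = wreathV₂ := by
  rw [wreathV₁, wreathV₂, conj_map_inl]
  congr 1
  ext b
  rw [Subgroup.mem_map_equiv]
  simp [wreathAction, wreathShift, Pi.evalMonoidHom, MonoidHom.mem_ker, Subgroup.mem_inf,
    show (1 - 2 : ZMod 3) = 2 from by decide]
  exact and_comm

lemma right_eq_one {g : WreathG} (hg : g ∈ Subgroup.normalizer (wreathU : Set WreathG)) : g.right = 1 := by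
  rw [Subgroup.mem_normalizer_iff] at hg
  have key : ∀ b : WreathBase, b 2 = 1 ↔ b (2 + Multiplicative.toAdd g.right) = 1 := by
    intro b
    have := hg (SemidirectProduct.inl b)
    rw [conj_inl] at this
    rw [wreathU, Subgroup.mem_map_iff_mem SemidirectProduct.inl_injective,
      Subgroup.mem_map_iff_mem SemidirectProduct.inl_injective] at this
    simpa [wreathU, Subgroup.mem_map_iff_mem (SemidirectProduct.inl_injective (φ := wreathAction)),
      Pi.evalMonoidHom, MonoidHom.mem_ker, wreathAction, wreathShift] using this
  have h0 : ∀ c : ZMod 3, (∀ b : WreathBase, b 2 = 1 ↔ b (2 + c) = 1) → c = 0 := by decide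
  have := h0 _ key
  exact Multiplicative.toAdd.injective (by simpa using this)

lemma part_c : ∀ g ∈ Subgroup.normalizer (wreathU : Set WreathG),
    Subgroup.map (MulAut.conj g).toMonoidHom wreathV₁ ≠ wreathV₂ := by
  intro g hg heq
  rw [wreathV₁, wreathV₂, conj_map_inl, right_eq_one hg, map_one] at heq
  have hfix : Subgroup.map (1 : MulAut WreathBase).toMonoidHom
      ((Pi.evalMonoidHom (fun _ : ZMod 3 => Multiplicative (ZMod 2)) 1).ker ⊓
        (Pi.evalMonoidHom (fun _ : ZMod 3 => Multiplicative (ZMod 2)) 2).ker) =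
      ((Pi.evalMonoidHom (fun _ : ZMod 3 => Multiplicative (ZMod 2)) 1).ker ⊓
        (Pi.evalMonoidHom (fun _ : ZMod 3 => Multiplicative (ZMod 2)) 2).ker) := by
    ext b; rw [Subgroup.mem_map_equiv]; rfl
  rw [hfix] at heq
  have hK := Subgroup.map_injective
    (SemidirectProduct.inl_injective (φ := wreathAction)) heq
  have hmem : Pi.mulSingle (0 : ZMod 3) (Multiplicative.ofAdd (1 : ZMod 2)) ∈
      ((Pi.evalMonoidHom (fun _ : ZMod 3 => Multiplicative (ZMod 2)) 1).ker ⊓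
        (Pi.evalMonoidHom (fun _ : ZMod 3 => Multiplicative (ZMod 2)) 2).ker) := by
    constructor <;> · show _ = 1; decide
  rw [hK] at hmem
  have h1 := MonoidHom.mem_ker.mp hmem.1
  exact absurd h1 (by decide)

/-- In `G = (ℤ/2)³ ⋊ ℤ/3`: (a) `V₂ = g V₁ g⁻¹` for some `g ∈ G`;
(b) no `g ∈ G` satisfies both `g U g⁻¹ = U` and `g V₁ g⁻¹ = V₂`; in particular no element
of the normalizer of `U` conjugates `V₁` to `V₂`. -/
theorem stmt13 :
    (∃ g : WreathG, Subgroup.map (MulAut.conj g).toMonoidHom wreathV₁ = wreathV₂) ∧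
      (¬ ∃ g : WreathG, Subgroup.map (MulAut.conj g).toMonoidHom wreathU = wreathU ∧
        Subgroup.map (MulAut.conj g).toMonoidHom wreathV₁ = wreathV₂) ∧
      (∀ g ∈ Subgroup.normalizer (wreathU : Set WreathG),
        Subgroup.map (MulAut.conj g).toMonoidHom wreathV₁ ≠ wreathV₂) := by
  refine ⟨⟨_, part_a⟩, ?_, part_c⟩
  rintro ⟨g, hU, hV⟩
  refine part_c g ?_ hV
  rw [Subgroup.mem_normalizer_iff]
  intro h
  constructor
  · intro hh
    rw [← hU]
    exact Subgroup.mem_map_of_mem _ hh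
  · intro hh
    rw [← hU, Subgroup.mem_map_equiv] at hh
    simpa [mul_assoc] using hh
end

section
/- Let V be a finite set, f: V → ℕ₊ a function, and ε₁, ε₂ : V → {split, inert} two labelings. For i = 1, 2 define the multiset M_i over ℕ₊ by contributing, for each v ∈ V, two copies of f(v) if ε_i(v) = split and one copy of 2·f(v) if ε_i(v) = inert. If M₁ = M₂ as multisets, then for every positive integer d, the number of v ∈ V with f(v) = d and ε₁(v) = split equals the number of v ∈ V with f(v) = d and ε₂(v) = split. Consequently there exists a bijection π: V → V with f ∘ π = f and ε₂ ∘ π = ε₁. -/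
/-!
Let `s_ε(d)` be the number of split `v` with `f v = d`. The multiplicity of `d` in the multiset
of `ε` is `2 s_ε(d)` plus the number of inert `v` with `2 f v = d`; the latter is `0` for odd `d`
and `#{f v = d / 2} - s_ε(d / 2)` for even `d`. So the multiplicities determine `s_ε(d)` from
`s_ε(d / 2)`, and strong induction on `d` recovers `s_ε` (at `d = 0` the relation involves only
`s_ε(0)`). Equal split counts force equal inert counts, i.e. equal fibres of `v ↦ (f v, ε v)`, and
the bijection is glued from bijections between these fibres.
-/

open Finset

section

variable {V : Type*} [Fintype V] (f : V → ℕ)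

def decompositionMultiset (ε : V → Bool) : Multiset ℕ :=
  univ.val.bind fun v => if ε v = true then {f v, f v} else {2 * f v}

theorem count_decompositionMultiset (ε : V → Bool) (d : ℕ) :
    (decompositionMultiset f ε).count d
      = 2 * #{v | f v = d ∧ ε v = true} + #{v | 2 * f v = d ∧ ε v = false} := by
  rw [decompositionMultiset, Multiset.count_bind, card_filter, card_filter, mul_sum,
    ← sum_add_distrib]
  refine sum_congr rfl fun v _ => ?_
  cases ε v <;> by_cases h : f v = d <;>
    simp [h, Multiset.count_singleton, eq_comm (a := d)]

theorem count_decompositionMultiset_two_mul (ε : V → Bool) (e : ℕ) :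
    (decompositionMultiset f ε).count (2 * e)
      = 2 * #{v | f v = 2 * e ∧ ε v = true} + #{v | f v = e ∧ ε v = false} := by
  rw [count_decompositionMultiset]
  congr 2
  exact filter_congr fun v _ => by simp

theorem count_decompositionMultiset_of_odd (ε : V → Bool) {d : ℕ} (hd : Odd d) :
    (decompositionMultiset f ε).count d = 2 * #{v | f v = d ∧ ε v = true} := by
  have hinert : #{v | 2 * f v = d ∧ ε v = false} = 0 :=
    card_eq_zero.2 <| filter_false_of_mem fun v _ ⟨h, _⟩ => by grind
  rw [count_decompositionMultiset, hinert, add_zero]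

theorem card_filter_split_add_card_filter_inert (ε : V → Bool) (d : ℕ) :
    #{v | f v = d ∧ ε v = true} + #{v | f v = d ∧ ε v = false} = #{v | f v = d} := by
  rw [← card_filter_add_card_filter_not (s := {v | f v = d}) (fun v => ε v = true),
    filter_filter, filter_filter]
  simp only [Bool.not_eq_true]

theorem card_filter_split_eq_of_decompositionMultiset_eq {ε₁ ε₂ : V → Bool}
    (hM : decompositionMultiset f ε₁ = decompositionMultiset f ε₂) (d : ℕ) :
    #{v | f v = d ∧ ε₁ v = true} = #{v | f v = d ∧ ε₂ v = true} := by
  induction d using Nat.strong_induction_on with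
  | _ d ih =>
    obtain ⟨e, rfl | rfl⟩ := Nat.even_or_odd' d
    · have hcount := congrArg (Multiset.count (2 * e)) hM
      rw [count_decompositionMultiset_two_mul, count_decompositionMultiset_two_mul] at hcount
      have h₁ := card_filter_split_add_card_filter_inert f ε₁ e
      have h₂ := card_filter_split_add_card_filter_inert f ε₂ e
      rcases Nat.eq_zero_or_pos e with rfl | he
      · simp only [mul_zero] at hcount ⊢
        omega
      · have := ih e (by omega)
        omega
    · have hcount := congrArg (Multiset.count (2 * e + 1)) hM
      rw [count_decompositionMultiset_of_odd f ε₁ (odd_two_mul_add_one e),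
        count_decompositionMultiset_of_odd f ε₂ (odd_two_mul_add_one e)] at hcount
      omega

end

theorem Equiv.Perm.exists_comp_eq_of_card_fiber_eq {V β : Type*} [Fintype V] [DecidableEq β]
    {g₁ g₂ : V → β} (h : ∀ b, #{v | g₁ v = b} = #{v | g₂ v = b}) :
    ∃ π : Equiv.Perm V, ∀ v, g₂ (π v) = g₁ v := by
  have e : ∀ b, {v // g₁ v = b} ≃ {v // g₂ v = b} := fun b =>
    Fintype.equivOfCardEq (by rw [Fintype.card_subtype, Fintype.card_subtype, h])
  exact ⟨Equiv.ofFiberEquiv e, Equiv.ofFiberEquiv_map e⟩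

theorem stmt15_general (V : Type*) [Fintype V] (f : V → ℕ)
    (ε₁ ε₂ : V → Bool)
    (hM : (Finset.univ.val.bind fun v =>
            if ε₁ v = true then ({f v, f v} : Multiset ℕ) else {2 * f v})
        = (Finset.univ.val.bind fun v =>
            if ε₂ v = true then ({f v, f v} : Multiset ℕ) else {2 * f v})) :
    (∀ d : ℕ, 0 < d →
      (Finset.univ.filter fun v => f v = d ∧ ε₁ v = true).card
        = (Finset.univ.filter fun v => f v = d ∧ ε₂ v = true).card) ∧
    ∃ π : Equiv.Perm V, (∀ v, f (π v) = f v) ∧ ∀ v, ε₂ (π v) = ε₁ v := by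
  have hsplit := card_filter_split_eq_of_decompositionMultiset_eq f (ε₁ := ε₁) (ε₂ := ε₂) hM
  refine ⟨fun d _ => hsplit d, ?_⟩
  obtain ⟨π, hπ⟩ := Equiv.Perm.exists_comp_eq_of_card_fiber_eq
    (g₁ := fun v => (f v, ε₁ v)) (g₂ := fun v => (f v, ε₂ v)) fun ⟨d, b⟩ => by
      have h₁ := card_filter_split_add_card_filter_inert f ε₁ d
      have h₂ := card_filter_split_add_card_filter_inert f ε₂ d
      have := hsplit d
      cases b <;> simp only [Prod.mk.injEq] <;> omega
  exact ⟨π, fun v => congrArg Prod.fst (hπ v), fun v => congrArg Prod.snd (hπ v)⟩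

/-- Let `V` be a finite set, `f : V → ℕ₊`, and `ε₁, ε₂ : V → Bool` two
labelings (`true` = split, `false` = inert).  For `i = 1, 2` form the multiset `M_i` over
`ℕ₊` contributing, for each `v`, two copies of `f v` if `ε_i v` is split and one copy of
`2 * f v` if inert.  If `M₁ = M₂`, then for every `d` the number of split `v` with
`f v = d` is the same for `ε₁` and `ε₂`; consequently some bijection `π : V → V`
preserves `f` and carries `ε₁` to `ε₂`. -/
theorem stmt15 (V : Type*) [Fintype V] [DecidableEq V] (f : V → ℕ) (hf : ∀ v, 0 < f v)
    (ε₁ ε₂ : V → Bool)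
    (hM : (Finset.univ.val.bind fun v =>
            if ε₁ v = true then ({f v, f v} : Multiset ℕ) else {2 * f v})
        = (Finset.univ.val.bind fun v =>
            if ε₂ v = true then ({f v, f v} : Multiset ℕ) else {2 * f v})) :
    (∀ d : ℕ, 0 < d →
      (Finset.univ.filter fun v => f v = d ∧ ε₁ v = true).card
        = (Finset.univ.filter fun v => f v = d ∧ ε₂ v = true).card) ∧
    ∃ π : Equiv.Perm V, (∀ v, f (π v) = f v) ∧ ∀ v, ε₂ (π v) = ε₁ v :=
  stmt15_general V f ε₁ ε₂ hM
end
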